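/- With notation as before (M a power of 2, H_0,...,H_{M−1} the cosets of the Hamming code of length M−1, C_i the characteristic function of H_i ∪ ... ∪ H_{i+c'−1} with indices mod M): if c' is odd, then each coloring C_i depends essentially on all M−1 arguments. -/

import Mathlib

/-- The Hamming graph `H(n, α)`: vertices are words of length `n` over `α`,
adjacent iff they differ in exactly one coordinate. -/
def HammingGraph (n : ℕ) (α : Type*) [DecidableEq α] : SimpleGraph (Fin n → α) where
  Adj x y := hammingDist x y = 1
  symm := ⟨fun x y h => by (try simp only at h ⊢); rwa [hammingDist_comm]⟩
  loopless := ⟨fun x h => by simp only [hammingDist_self] at h; exact absurd h (by omega)⟩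

instance {n : ℕ} {α : Type*} [DecidableEq α] : DecidableRel (HammingGraph n α).Adj :=
  fun x y => inferInstanceAs (Decidable (hammingDist x y = 1))

/-- `f` is a perfect coloring of `G` with quotient matrix `S`: every vertex of
color `i` has exactly `S i j` neighbors of color `j`. -/
def IsPerfectColoring {V K : Type*} [Fintype V] [DecidableEq K] (G : SimpleGraph V)
    [DecidableRel G.Adj] (f : V → K) (S : K → K → ℕ) : Prop :=
  ∀ x : V, ∀ j : K, (Finset.univ.filter (fun y => G.Adj x y ∧ f y = j)).card = S (f x) j

/-- A function on words depends essentially on its `k`-th argument. -/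
def EssentialDep {α K : Type*} {n : ℕ} (f : (Fin n → α) → K) (k : Fin n) : Prop :=
  ∃ x y : Fin n → α, (∀ t, t ≠ k → x t = y t) ∧ f x ≠ f y


/-! Translation by an element `e` of order two outside the code permutes the cosets of the code
as a fixed-point-free involution. If the coloring did not depend on coordinate `k`, translation
by the unit vector `e_k` (not a codeword, as a perfect code has minimum distance three) would
preserve the union of the `c'` cosets of the first color, which would make `c'` even. -/

theorem Finset.even_card_of_involution {α : Type*} {s : Finset α} (g : α → α)
    (hg_ne : ∀ a ∈ s, g a ≠ a) (hg_mem : ∀ a ∈ s, g a ∈ s) (hg_inv : ∀ a ∈ s, g (g a) = a) :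
    Even s.card := by
  rw [← ZMod.natCast_eq_zero_iff_even, card_eq_sum_ones, Nat.cast_sum]
  exact sum_involution (fun a _ => g a) (fun _ _ => rfl) (fun a ha _ => hg_ne a ha)
    hg_mem hg_inv

theorem hammingNorm_single_le_one {ι β : Type*} [Fintype ι] [DecidableEq ι] [DecidableEq β]
    [Zero β] (k : ι) (b : β) : hammingNorm (Pi.single k b : ι → β) ≤ 1 := by
  have h_eq_k : ∀ t, (Pi.single k b : ι → β) t ≠ 0 → t = k := fun t ht => by
    by_contra htk
    exact ht (Pi.single_eq_of_ne (M := fun _ => β) htk b)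
  refine Finset.card_le_one.2 fun t ht u hu => ?_
  simp only [Finset.mem_filter, Finset.mem_univ, true_and] at ht hu
  rw [h_eq_k t ht, h_eq_k u hu]

theorem notMem_of_perfect_code_of_hammingNorm_le_one {ι β : Type*} [Fintype ι] [DecidableEq β]
    [Zero β] {C : Set (ι → β)} (hC : ∀ x, ∃! c, c ∈ C ∧ hammingDist x c ≤ 1) (h0 : 0 ∈ C)
    {e : ι → β} (he : hammingNorm e ≤ 1) (he0 : e ≠ 0) : e ∉ C := fun heC =>
  he0 <| (hC e).unique ⟨heC, by simp⟩ ⟨h0, by rwa [hammingDist_zero_right]⟩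

theorem add_single_mem_iff_of_not_essentialDep {α K : Type*} [AddZeroClass α] {n : ℕ}
    [DecidableEq (Fin n → α)] {S : Finset (Fin n → α)} {a b : K} (hab : a ≠ b) {k : Fin n}
    (hS : ¬ EssentialDep (fun x => if x ∈ S then a else b) k) (x : Fin n → α) (c : α) :
    x + Pi.single k c ∈ S ↔ x ∈ S := by
  simp only [EssentialDep, not_exists, not_and, not_not] at hS
  have h := hS x (x + Pi.single k c) fun t htk => by
    rw [Pi.add_apply, Pi.single_eq_of_ne htk, add_zero]
  by_cases hx : x ∈ S <;> by_cases hxc : x + Pi.single k c ∈ S <;> simp_all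

theorem mem_iff_sub_mem_of_mem {G : Type*} [AddCommGroup G] {K : AddSubgroup G} {s : Set G}
    {v : G} (hs : ∀ x, x ∈ s ↔ x - v ∈ K) {x y : G} (hx : x ∈ s) : y ∈ s ↔ y - x ∈ K := by
  have hxv : x - v ∈ K := (hs x).1 hx
  rw [hs y]
  constructor
  · intro hyv
    simpa using K.sub_mem hyv hxv
  · intro hyx
    simpa using K.add_mem hyx hxv

theorem even_card_of_add_mem_biUnion_cosets {G J : Type*} [AddCommGroup G] [DecidableEq G]
    {K : AddSubgroup G} {H : J → Finset G} (hcoset : ∀ j, ∃ v, ∀ x, x ∈ H j ↔ x - v ∈ K)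
    (hpart : ∀ x, ∃! j, x ∈ H j) {e : G} (he : e ∉ K) (he2 : e + e = 0) {T : Finset J}
    (hT : ∀ x ∈ T.biUnion H, x + e ∈ T.biUnion H) : Even T.card := by
  choose v hv using hcoset
  choose ι hι using fun x => (hpart x).exists
  have hv_mem : ∀ j, v j ∈ H j := fun j => (hv j _).2 (by simp)
  have hsame : ∀ {j x y}, x ∈ H j → (y ∈ H j ↔ y - x ∈ K) := fun {j} =>
    mem_iff_sub_mem_of_mem (s := (H j : Set G)) (hv j)
  refine Finset.even_card_of_involution (fun j => ι (v j + e)) (fun j _ hfix => he ?_)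
    (fun j hj => ?_) (fun j _ => ?_)
  · have h := (hsame (hv_mem j)).1 (hfix ▸ hι (v j + e))
    rwa [add_sub_cancel_left] at h
  · have hvj : v j ∈ T.biUnion H := Finset.mem_biUnion.2 ⟨j, hj, hv_mem j⟩
    obtain ⟨j', hj', hmem⟩ := Finset.mem_biUnion.1 (hT (v j) hvj)
    rwa [(hpart _).unique (hι _) hmem]
  · refine ((hpart _).unique (hι _) ((hsame (hv_mem j)).2 ?_))
    have h := (hsame (hι (v j + e))).1 (hv_mem (ι (v j + e)))
    have hsplit : v (ι (v j + e)) + e - v j = v (ι (v j + e)) - (v j + e) + (e + e) := by abel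
    rw [hsplit, he2, add_zero]
    exact h

theorem card_image_add_mod_range {M c : ℕ} (hM0 : 0 < M) (hc : c ≤ M) (i : ℕ) :
    ((Finset.range c).image fun t => (⟨(i + t) % M, Nat.mod_lt _ hM0⟩ : Fin M)).card = c := by
  rw [Finset.card_image_of_injOn, Finset.card_range]
  intro t ht u hu htu
  simp only [Finset.coe_range, Set.mem_Iio] at ht hu
  have hmod := Nat.ModEq.add_left_cancel' i (congrArg Fin.val htu : (i + t) % M = (i + u) % M)
  rwa [Nat.ModEq, Nat.mod_eq_of_lt (by omega), Nat.mod_eq_of_lt (by omega)] at hmod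

theorem stmt14_general (M : ℕ) (hM0 : 0 < M)
    (Hcode : Submodule (ZMod 2) (Fin (M - 1) → ZMod 2))
    (hperfcode : ∀ x : Fin (M - 1) → ZMod 2, ∃! c, c ∈ Hcode ∧ hammingDist x c ≤ 1)
    (H : Fin M → Finset (Fin (M - 1) → ZMod 2))
    (hcoset : ∀ j : Fin M, ∃ v, ∀ x, x ∈ H j ↔ x - v ∈ Hcode)
    (hpart : ∀ x, ∃! j : Fin M, x ∈ H j)
    (c' : ℕ) (hc2 : c' < M) (hodd : Odd c') (i : ℕ) :
    ∀ k : Fin (M - 1),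
      EssentialDep
        (fun x : Fin (M - 1) → ZMod 2 =>
          if x ∈ (Finset.range c').biUnion
              (fun t => H ⟨(i + t) % M, Nat.mod_lt _ hM0⟩)
            then (0 : Fin 2) else 1) k := by
  intro k
  by_contra hdep
  set T := (Finset.range c').image fun t => (⟨(i + t) % M, Nat.mod_lt _ hM0⟩ : Fin M)
  set e : Fin (M - 1) → ZMod 2 := Pi.single k 1
  have he : e ∉ Hcode := notMem_of_perfect_code_of_hammingNorm_le_one
    (C := (Hcode : Set (Fin (M - 1) → ZMod 2))) hperfcode Hcode.zero_mem
    (hammingNorm_single_le_one k 1) (by simp [e])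
  have he2 : e + e = 0 := by
    rw [← Pi.single_add, show (1 + 1 : ZMod 2) = 0 from rfl, Pi.single_zero]
  have hT : ∀ x ∈ T.biUnion H, x + e ∈ T.biUnion H := by
    intro x hx
    rw [Finset.image_biUnion] at hx ⊢
    exact (add_single_mem_iff_of_not_essentialDep (by decide) hdep x 1).2 hx
  have heven :=
    even_card_of_add_mem_biUnion_cosets (K := Hcode.toAddSubgroup) hcoset hpart he he2 hT
  rw [card_image_add_mod_range hM0 hc2.le] at heven
  exact Nat.not_even_iff_odd.mpr hodd heven

/-- If `c'` is odd, then the 2-coloring of `H(M-1,2)` whose first color class is the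
union of `c'` cyclically consecutive cosets of the Hamming code depends essentially
on all `M-1` arguments. -/
theorem stmt14 (s : ℕ) (hs : 2 ≤ s) (M : ℕ) (hM : M = 2 ^ s) (hM0 : 0 < M)
    (Hcode : Submodule (ZMod 2) (Fin (M - 1) → ZMod 2))
    (hperfcode : ∀ x : Fin (M - 1) → ZMod 2, ∃! c, c ∈ Hcode ∧ hammingDist x c ≤ 1)
    (H : Fin M → Finset (Fin (M - 1) → ZMod 2))
    (h0 : ∀ x, x ∈ H ⟨0, hM0⟩ ↔ x ∈ Hcode)
    (hcoset : ∀ j : Fin M, ∃ v, ∀ x, x ∈ H j ↔ x - v ∈ Hcode)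
    (hpart : ∀ x, ∃! j : Fin M, x ∈ H j)
    (c' : ℕ) (hc1 : 0 < c') (hc2 : c' < M) (hodd : Odd c') (i : ℕ) (hi : i < M) :
    ∀ k : Fin (M - 1),
      EssentialDep
        (fun x : Fin (M - 1) → ZMod 2 =>
          if x ∈ (Finset.range c').biUnion
              (fun t => H ⟨(i + t) % M, Nat.mod_lt _ hM0⟩)
            then (0 : Fin 2) else 1) k :=
  stmt14_general M hM0 Hcode hperfcode H hcoset hpart c' hc2 hodd i
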